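/- arXiv:2306.04215 — 5 statements merged into one kernel-verified Lean document; each statement's English description precedes it below -/
import Mathlib

section
/- Let a > −1, C₁ > 0, δ > 0 and τ ∈ ℝ. Let d : [τ − δ, τ] → ℝ be continuous with d(τ) = 0, d(t) > 0 for all t ∈ [τ − δ, τ), differentiable on (τ − δ, τ), and satisfying d'(t) ≥ −C₁ · d(t)^{−(1+a)} for all t ∈ (τ − δ, τ). Then d(t) ≤ ((2+a) C₁ (τ − t))^{1/(2+a)} for all t ∈ [τ − δ, τ]. -/
/-!
With `p = 2 + a > 0`, the hypothesis `d' ≥ -C₁ d^{1-p}` says exactly that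
`(d^p)' = p d^{p-1} d' ≥ -p C₁`, so `s ↦ d(s)^p + p C₁ s` is nondecreasing. Comparing its values at
`t` and at the collision time `τ`, where `d` vanishes, gives `d(t)^p ≤ p C₁ (τ - t)`.
-/

open Set Real

section Comparison

variable {d : ℝ → ℝ} {a b p C : ℝ}

theorem neg_mul_le_mul_rpow_sub_one_mul {x y : ℝ} (hp : 0 < p) (hx : 0 < x)
    (h : -C * x ^ (1 - p) ≤ y) : -(p * C) ≤ p * x ^ (p - 1) * y := by
  have hcancel : x ^ (p - 1) * x ^ (1 - p) = 1 := by
    rw [← rpow_add hx, sub_add_sub_cancel', sub_self, rpow_zero]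
  calc -(p * C) = p * x ^ (p - 1) * (-C * x ^ (1 - p)) := by
        linear_combination (-(p * C)) * hcancel.symm
    _ ≤ p * x ^ (p - 1) * y := by gcongr

theorem monotoneOn_rpow_add_mul_of_le_deriv (hp : 0 < p) (hcont : ContinuousOn d (Icc a b))
    (hpos : ∀ t ∈ Ioo a b, 0 < d t) (hdiff : ∀ t ∈ Ioo a b, DifferentiableAt ℝ d t)
    (hineq : ∀ t ∈ Ioo a b, -C * d t ^ (1 - p) ≤ deriv d t) :
    MonotoneOn (fun s => d s ^ p + p * C * s) (Icc a b) := by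
  have hderiv : ∀ t ∈ Ioo a b, HasDerivAt (fun s => d s ^ p + p * C * s)
      (p * d t ^ (p - 1) * deriv d t + p * C) t := fun t ht =>
    (((hdiff t ht).hasDerivAt.rpow_const (Or.inl (hpos t ht).ne')).add
      ((hasDerivAt_id' t).const_mul (p * C))).congr_deriv (by ring)
  have hcont' : ContinuousOn (fun s => d s ^ p + p * C * s) (Icc a b) :=
    (hcont.rpow_const fun _ _ => Or.inr hp.le).add (by fun_prop)
  refine monotoneOn_of_deriv_nonneg (convex_Icc a b) hcont' ?_ ?_ <;> rw [interior_Icc]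
  · exact fun t ht => (hderiv t ht).differentiableAt.differentiableWithinAt
  · intro t ht
    rw [(hderiv t ht).deriv]
    linarith [neg_mul_le_mul_rpow_sub_one_mul hp (hpos t ht) (hineq t ht)]

theorem le_rpow_one_div_of_le_deriv (hp : 0 < p) (hcont : ContinuousOn d (Icc a b))
    (hzero : d b = 0) (hpos : ∀ t ∈ Ico a b, 0 < d t)
    (hdiff : ∀ t ∈ Ioo a b, DifferentiableAt ℝ d t)
    (hineq : ∀ t ∈ Ioo a b, -C * d t ^ (1 - p) ≤ deriv d t) :
    ∀ t ∈ Icc a b, d t ≤ (p * C * (b - t)) ^ (1 / p) := by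
  intro t ht
  have hmono := monotoneOn_rpow_add_mul_of_le_deriv hp hcont
    (fun s hs => hpos s (Ioo_subset_Ico_self hs)) hdiff hineq
  have hpow : d t ^ p ≤ p * C * (b - t) := by
    have := hmono ht (right_mem_Icc.2 (ht.1.trans ht.2)) ht.2
    simp only [hzero, zero_rpow hp.ne'] at this
    linarith
  have hnonneg : 0 ≤ d t := by
    rcases ht.2.lt_or_eq with hlt | rfl
    · exact (hpos t ⟨ht.1, hlt⟩).le
    · exact hzero.ge
  rw [one_div, le_rpow_inv_iff_of_pos hnonneg ((rpow_nonneg hnonneg p).trans hpow) hp]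
  exact hpow

end Comparison

theorem stmt3_general (a C₁ δ τ : ℝ) (ha : -1 < a)
    (d : ℝ → ℝ)
    (hcont : ContinuousOn d (Set.Icc (τ - δ) τ))
    (hzero : d τ = 0)
    (hpos : ∀ t ∈ Set.Ico (τ - δ) τ, 0 < d t)
    (hdiff : ∀ t ∈ Set.Ioo (τ - δ) τ, DifferentiableAt ℝ d t)
    (hineq : ∀ t ∈ Set.Ioo (τ - δ) τ, -C₁ * d t ^ (-(1 + a)) ≤ deriv d t) :
    ∀ t ∈ Set.Icc (τ - δ) τ, d t ≤ ((2 + a) * C₁ * (τ - t)) ^ ((1 : ℝ) / (2 + a)) := by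
  have hexp : 1 - (2 + a) = -(1 + a) := by ring
  exact le_rpow_one_div_of_le_deriv (by linarith) hcont hzero hpos hdiff (hexp ▸ hineq)

/-- ODE comparison used in the proof of Theorem 2.4(iii): if `d` is continuous on `[τ-δ, τ]`,
positive before `τ` with `d(τ) = 0`, differentiable on `(τ-δ, τ)` with
`d' ≥ -C₁ d^{-(1+a)}`, then `d(t) ≤ ((2+a) C₁ (τ - t))^{1/(2+a)}` on `[τ-δ, τ]`. -/
theorem stmt3 (a C₁ δ τ : ℝ) (ha : -1 < a) (hC₁ : 0 < C₁) (hδ : 0 < δ)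
    (d : ℝ → ℝ)
    (hcont : ContinuousOn d (Set.Icc (τ - δ) τ))
    (hzero : d τ = 0)
    (hpos : ∀ t ∈ Set.Ico (τ - δ) τ, 0 < d t)
    (hdiff : ∀ t ∈ Set.Ioo (τ - δ) τ, DifferentiableAt ℝ d t)
    (hineq : ∀ t ∈ Set.Ioo (τ - δ) τ, -C₁ * d t ^ (-(1 + a)) ≤ deriv d t) :
    ∀ t ∈ Set.Icc (τ - δ) τ, d t ≤ ((2 + a) * C₁ * (τ - t)) ^ ((1 : ℝ) / (2 + a)) :=
  stmt3_general a C₁ δ τ ha d hcont hzero hpos hdiff hineq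
end

section
/- Let k ≥ 1 be an integer and let f : (0,1) → ℝ be k times continuously differentiable. If the function x ↦ x^k f^{(k)}(x) is Lebesgue integrable on (0,1), then: (a) for every ℓ ∈ {0, 1, …, k−1} the function x ↦ x^ℓ f^{(ℓ)}(x) is Lebesgue integrable on (0,1); and (b) for every ℓ ∈ {1, …, k} one has x^ℓ f^{(ℓ−1)}(x) → 0 as x → 0⁺. -/
/-!
Each step `ℓ + 1 → ℓ` is a weighted Hardy inequality for `g = f^{(ℓ)}`. Away from `0` the weight
`x ^ (ℓ + 1)` is bounded below, so `g'` is integrable and `g` bounded there. Near `0`,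
`|g x| ≤ |g c| + G x` with `G x = ∫ t in x..c, |g' t|`, and integration by parts gives
`(ℓ + 1) ∫ x in ε..c, x ^ ℓ * G x ≤ ∫ t in 0..c, t ^ (ℓ + 1) * |g' t|` uniformly in `ε`, hence
integrability of `x ^ ℓ * g x`. Since `G` is antitone, `x ^ (ℓ + 1) * G x` is dominated by
`(ℓ + 1) ∫ t in 0..x, t ^ ℓ * G t`, which tends to `0`. Downward induction from `ℓ = k`
gives the theorem.
-/

open Set Filter Topology MeasureTheory

section Hardy

variable {n : ℕ} {c : ℝ} {φ : ℝ → ℝ}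

lemma integral_pow_mul_integral_le (hφ : ContinuousOn φ (Ioc 0 c))
    (hφ0 : ∀ t ∈ Ioc 0 c, 0 ≤ φ t)
    (hint : IntegrableOn (fun t => t ^ (n + 1) * φ t) (Ioc 0 c))
    {ε : ℝ} (hε : 0 < ε) (hεc : ε ≤ c) :
    ∫ x in ε..c, x ^ n * ∫ t in x..c, φ t ≤
      (∫ t in Ioc 0 c, t ^ (n + 1) * φ t) / (n + 1) := by
  have hsub : Icc ε c ⊆ Ioc 0 c := fun t ht => ⟨hε.trans_le ht.1, ht.2⟩
  have hφi : IntegrableOn φ (uIcc ε c) := by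
    rw [uIcc_of_le hεc]; exact (hφ.mono hsub).integrableOn_Icc
  have hG : ∀ x ∈ Ioo (min ε c) (max ε c),
      HasDerivAt (fun x => ∫ t in x..c, φ t) (-φ x) x := by
    intro x hx
    rw [min_eq_left hεc, max_eq_right hεc] at hx
    have hx' : x ∈ Ioo 0 c := ⟨hε.trans hx.1, hx.2⟩
    have hφo : ContinuousOn φ (Ioo 0 c) := hφ.mono Ioo_subset_Ioc_self
    refine intervalIntegral.integral_hasDerivAt_left
      (hφi.intervalIntegrable.mono_set (uIcc_subset_uIcc_right ?_))
      (hφo.stronglyMeasurableAtFilter isOpen_Ioo x hx')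
      (hφo.continuousAt (isOpen_Ioo.mem_nhds hx'))
    rw [uIcc_of_le hεc]; exact ⟨hx.1.le, hx.2.le⟩
  have hv : ∀ x ∈ Ioo (min ε c) (max ε c),
      HasDerivAt (fun x : ℝ => x ^ (n + 1) / (n + 1)) (x ^ n) x := fun x _ =>
    ((hasDerivAt_pow (n + 1) x).div_const ((n : ℝ) + 1)).congr_deriv (by push_cast; field_simp)
  have ibp := intervalIntegral.integral_mul_deriv_eq_deriv_mul_of_hasDerivAt
    (intervalIntegral.continuousOn_primitive_interval_left hφi) (by fun_prop) hG hv
    hφi.intervalIntegrable.neg ((continuous_pow n).intervalIntegrable ε c)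
  have hGε : 0 ≤ ∫ t in ε..c, φ t :=
    intervalIntegral.integral_nonneg hεc fun t ht => hφ0 t (hsub ht)
  have htail : ∫ x in ε..c, x ^ (n + 1) * φ x ≤ ∫ t in Ioc 0 c, t ^ (n + 1) * φ t := by
    rw [intervalIntegral.integral_of_le hεc]
    refine setIntegral_mono_set hint ?_ (Ioc_subset_Ioc_left hε.le).eventuallyLE
    exact (ae_restrict_iff' measurableSet_Ioc).2
      (ae_of_all _ fun t ht => mul_nonneg (pow_nonneg ht.1.le _) (hφ0 t ht))
  have hdiv : ∫ x in ε..c, φ x * (x ^ (n + 1) / (n + 1))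
      = (∫ x in ε..c, x ^ (n + 1) * φ x) / (n + 1) := by
    rw [← intervalIntegral.integral_div]; congr 1; ext x; ring
  simp only [intervalIntegral.integral_same, zero_mul, zero_sub, neg_mul,
    intervalIntegral.integral_neg, sub_neg_eq_add, hdiv] at ibp
  simp_rw [mul_comm (_ ^ n), ibp]
  have hn : (0 : ℝ) ≤ n + 1 := by positivity
  have := mul_nonneg hGε (div_nonneg (pow_nonneg hε.le (n + 1)) hn)
  linarith [div_le_div_of_nonneg_right htail hn]

lemma integrableOn_pow_mul_integral (hφ : ContinuousOn φ (Ioc 0 c))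
    (hφ0 : ∀ t ∈ Ioc 0 c, 0 ≤ φ t)
    (hint : IntegrableOn (fun t => t ^ (n + 1) * φ t) (Ioc 0 c)) :
    IntegrableOn (fun x => x ^ n * ∫ t in x..c, φ t) (Ioc 0 c) := by
  rcases le_or_gt c 0 with hc | hc
  · simp [Ioc_eq_empty hc.not_gt]
  have ha : ∀ i : ℕ, 0 < c / (i + 1) ∧ c / (i + 1) ≤ c := fun i =>
    ⟨by positivity, div_le_self hc.le (by simp)⟩
  refine integrableOn_Ioc_of_intervalIntegral_norm_bounded_left (l := atTop)
    (a := fun i : ℕ => c / (i + 1)) (I := (∫ t in Ioc 0 c, t ^ (n + 1) * φ t) / (n + 1))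
    (fun i => ?_) ?_ (Eventually.of_forall fun i => ?_)
  · have hφi : IntegrableOn φ (uIcc (c / (i + 1)) c) := by
      rw [uIcc_of_le (ha i).2]
      exact (hφ.mono fun t ht => ⟨(ha i).1.trans_le ht.1, ht.2⟩).integrableOn_Icc
    have := (continuous_pow n).continuousOn.mul
      (intervalIntegral.continuousOn_primitive_interval_left hφi)
    rw [uIcc_of_le (ha i).2] at this
    exact this.integrableOn_Icc.mono_set Ioc_subset_Icc_self
  · simpa [div_eq_mul_inv] using
      (tendsto_one_div_add_atTop_nhds_zero_nat (𝕜 := ℝ)).const_mul c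
  · refine le_of_eq_of_le ?_ (integral_pow_mul_integral_le hφ hφ0 hint (ha i).1 (ha i).2)
    rw [intervalIntegral.integral_of_le (ha i).2]
    refine setIntegral_congr_fun measurableSet_Ioc fun x hx => ?_
    have hx0 : 0 < x := (ha i).1.trans hx.1
    exact Real.norm_of_nonneg (mul_nonneg (pow_nonneg hx0.le n)
      (intervalIntegral.integral_nonneg hx.2 fun t ht => hφ0 t ⟨hx0.trans_le ht.1, ht.2⟩))

lemma tendsto_pow_succ_mul_integral (hc : 0 < c) (hφ : ContinuousOn φ (Ioc 0 c))
    (hφ0 : ∀ t ∈ Ioc 0 c, 0 ≤ φ t)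
    (hint : IntegrableOn (fun t => t ^ (n + 1) * φ t) (Ioc 0 c)) :
    Tendsto (fun x => x ^ (n + 1) * ∫ t in x..c, φ t) (𝓝[>] 0) (𝓝 0) := by
  set G : ℝ → ℝ := fun x => ∫ t in x..c, φ t
  have hGi := integrableOn_pow_mul_integral hφ hφ0 hint
  have hG0 : ∀ x ∈ Ioc 0 c, 0 ≤ G x := fun x hx =>
    intervalIntegral.integral_nonneg hx.2 fun t ht => hφ0 t ⟨hx.1.trans_le ht.1, ht.2⟩
  have hbound : ∀ x ∈ Ioc 0 c,
      x ^ (n + 1) * G x ≤ (n + 1) * ∫ t in Ioc 0 x, t ^ n * G t := by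
    intro x hx
    have hmono : ∫ t in Ioc 0 x, t ^ n * G x ≤ ∫ t in Ioc 0 x, t ^ n * G t := by
      refine setIntegral_mono_on ?_ (hGi.mono_set (Ioc_subset_Ioc_right hx.2))
        measurableSet_Ioc fun t ht => mul_le_mul_of_nonneg_left ?_ (pow_nonneg ht.1.le n)
      · exact ((continuous_pow n).mul continuous_const).integrableOn_Icc.mono_set
          Ioc_subset_Icc_self
      · exact intervalIntegral.integral_mono_interval ht.2 hx.2 le_rfl
          ((ae_restrict_iff' measurableSet_Ioc).2 (ae_of_all _ fun s hs =>
            hφ0 s ⟨ht.1.trans hs.1, hs.2⟩))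
          ((hφ.mono fun s hs => ⟨ht.1.trans_le hs.1, hs.2⟩).intervalIntegrable_of_Icc
            (ht.2.trans hx.2))
    rw [integral_mul_const, ← intervalIntegral.integral_of_le hx.1.le, integral_pow] at hmono
    have hn : (0 : ℝ) < n + 1 := by positivity
    rw [zero_pow n.succ_ne_zero, sub_zero, div_mul_eq_mul_div, div_le_iff₀ hn] at hmono
    linarith
  have hprim : Tendsto (fun x => ∫ t in Ioc 0 x, t ^ n * G t) (𝓝[>] 0) (𝓝 0) := by
    have hcont := intervalIntegral.continuousOn_primitive
      ((integrableOn_Icc_iff_integrableOn_Ioc).2 hGi) 0 ⟨le_rfl, hc.le⟩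
    simpa using hcont.tendsto.mono_left (nhdsWithin_le_of_mem (Icc_mem_nhdsGT hc))
  refine squeeze_zero' ?_ ?_ (by simpa using hprim.const_mul ((n : ℝ) + 1))
  · filter_upwards [Ioc_mem_nhdsGT hc] with x hx using
      mul_nonneg (pow_nonneg hx.1.le _) (hG0 x hx)
  · filter_upwards [Ioc_mem_nhdsGT hc] with x hx using hbound x hx

end Hardy

section Step

variable {n : ℕ} {b : ℝ} {g g' : ℝ → ℝ}

lemma abs_sub_le_integral_abs_deriv {x y : ℝ} (hxy : x ≤ y)
    (hg : ∀ t ∈ Icc x y, HasDerivAt g (g' t) t) (hg' : ContinuousOn g' (Icc x y)) :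
    |g y - g x| ≤ ∫ t in x..y, |g' t| := by
  rw [← intervalIntegral.integral_eq_sub_of_hasDerivAt
    (fun t ht => hg t (by rwa [uIcc_of_le hxy] at ht)) (hg'.intervalIntegrable_of_Icc hxy)]
  simpa only [Real.norm_eq_abs] using
    intervalIntegral.norm_integral_le_integral_norm (f := g') hxy

lemma abs_le_abs_add_integral_abs_deriv {c x : ℝ} (hcb : c < b) (hx : x ∈ Ioc 0 c)
    (hg : ∀ x ∈ Ioo 0 b, HasDerivAt g (g' x) x) (hg' : ContinuousOn g' (Ioo 0 b)) :
    |g x| ≤ |g c| + ∫ t in x..c, |g' t| := by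
  have hsub : Icc x c ⊆ Ioo 0 b := fun t ht => ⟨hx.1.trans_le ht.1, ht.2.trans_lt hcb⟩
  have := abs_sub_le_integral_abs_deriv hx.2 (fun t ht => hg t (hsub ht)) (hg'.mono hsub)
  linarith [abs_sub_abs_le_abs_sub (g x) (g c), abs_sub_comm (g x) (g c)]

lemma integrableOn_pow_succ_mul_abs {c : ℝ} (hcb : c < b)
    (hint : IntegrableOn (fun x => x ^ (n + 1) * g' x) (Ioo 0 b)) :
    IntegrableOn (fun x => x ^ (n + 1) * |g' x|) (Ioc 0 c) :=
  (IntegrableOn.mono_set hint.norm (Ioc_subset_Ioo_right hcb)).congr_fun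
    (fun x hx => by simp [abs_of_pos hx.1]) measurableSet_Ioc

lemma integrableOn_abs_deriv_Ioo {c : ℝ} (hc : 0 < c) (hg' : ContinuousOn g' (Ioo 0 b))
    (hint : IntegrableOn (fun x => x ^ (n + 1) * g' x) (Ioo 0 b)) :
    IntegrableOn (fun x => |g' x|) (Ioo c b) := by
  have hsub : Ioo c b ⊆ Ioo 0 b := Ioo_subset_Ioo_left hc.le
  refine Integrable.mono' ((hint.mono_set hsub).norm.const_mul (c ^ (n + 1))⁻¹)
    ((hg'.mono hsub).abs.aestronglyMeasurable measurableSet_Ioo)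
    ((ae_restrict_iff' measurableSet_Ioo).2 (ae_of_all _ fun x hx => ?_))
  rw [Real.norm_eq_abs, abs_abs, le_inv_mul_iff₀ (by positivity), norm_mul, norm_pow,
    Real.norm_of_nonneg (hc.trans hx.1).le, Real.norm_eq_abs]
  exact mul_le_mul_of_nonneg_right (pow_le_pow_left₀ hc.le hx.1.le _) (abs_nonneg _)

theorem tendsto_pow_succ_mul_of_integrableOn_pow_succ_mul_deriv (hb : 0 < b)
    (hg : ∀ x ∈ Ioo 0 b, HasDerivAt g (g' x) x) (hg' : ContinuousOn g' (Ioo 0 b))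
    (hint : IntegrableOn (fun x => x ^ (n + 1) * g' x) (Ioo 0 b)) :
    Tendsto (fun x => x ^ (n + 1) * g x) (𝓝[>] 0) (𝓝 0) := by
  obtain ⟨c, hc, hcb⟩ : ∃ c, 0 < c ∧ c < b := ⟨b / 2, half_pos hb, half_lt_self hb⟩
  have hG := tendsto_pow_succ_mul_integral hc (hg'.mono (Ioc_subset_Ioo_right hcb)).abs
    (fun t _ => abs_nonneg _) (integrableOn_pow_succ_mul_abs hcb hint)
  have hpow : Tendsto (fun x : ℝ => x ^ (n + 1) * |g c|) (𝓝[>] 0) (𝓝 0) := by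
    have : Continuous fun x : ℝ => x ^ (n + 1) * |g c| := by fun_prop
    exact (this.tendsto' 0 0 (by simp)).mono_left nhdsWithin_le_nhds
  refine squeeze_zero_norm' ?_ (by simpa using hpow.add hG)
  filter_upwards [Ioc_mem_nhdsGT hc] with x hx
  rw [norm_mul, norm_pow, Real.norm_of_nonneg hx.1.le, Real.norm_eq_abs, ← mul_add]
  exact mul_le_mul_of_nonneg_left (abs_le_abs_add_integral_abs_deriv hcb hx hg hg')
    (pow_nonneg hx.1.le _)

lemma integrableOn_pow_mul_Ioc {c : ℝ} (hcb : c < b)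
    (hg : ∀ x ∈ Ioo 0 b, HasDerivAt g (g' x) x) (hg' : ContinuousOn g' (Ioo 0 b))
    (hint : IntegrableOn (fun x => x ^ (n + 1) * g' x) (Ioo 0 b)) :
    IntegrableOn (fun x => x ^ n * g x) (Ioc 0 c) := by
  have hsub : Ioc 0 c ⊆ Ioo 0 b := Ioc_subset_Ioo_right hcb
  have hG := integrableOn_pow_mul_integral (hg'.mono hsub).abs (fun t _ => abs_nonneg _)
    (integrableOn_pow_succ_mul_abs hcb hint)
  have hconst : IntegrableOn (fun x : ℝ => x ^ n * |g c|) (Ioc 0 c) :=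
    (by fun_prop : Continuous fun x : ℝ => x ^ n * |g c|).integrableOn_Icc.mono_set
      Ioc_subset_Icc_self
  refine Integrable.mono' (hconst.add hG)
    (((continuous_pow n).continuousOn.mul fun x hx =>
      (hg x (hsub hx)).continuousAt.continuousWithinAt).aestronglyMeasurable measurableSet_Ioc)
    ((ae_restrict_iff' measurableSet_Ioc).2 (ae_of_all _ fun x hx => ?_))
  rw [norm_mul, norm_pow, Real.norm_of_nonneg hx.1.le, Real.norm_eq_abs, Pi.add_apply,
    ← mul_add]
  exact mul_le_mul_of_nonneg_left (abs_le_abs_add_integral_abs_deriv hcb hx hg hg')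
    (pow_nonneg hx.1.le _)

lemma integrableOn_pow_mul_Ioo {c : ℝ} (hc : 0 < c)
    (hg : ∀ x ∈ Ioo 0 b, HasDerivAt g (g' x) x) (hg' : ContinuousOn g' (Ioo 0 b))
    (hint : IntegrableOn (fun x => x ^ (n + 1) * g' x) (Ioo 0 b)) :
    IntegrableOn (fun x => x ^ n * g x) (Ioo c b) := by
  have hg'i := integrableOn_abs_deriv_Ioo hc hg' hint
  set K := |g c| + ∫ t in Ioo c b, |g' t|
  refine Integrable.mono'
    ((by fun_prop : Continuous fun x : ℝ => x ^ n * K).integrableOn_Icc.mono_set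
      Ioo_subset_Icc_self)
    (((continuous_pow n).continuousOn.mul fun x hx =>
      (hg x ⟨hc.trans hx.1, hx.2⟩).continuousAt.continuousWithinAt).aestronglyMeasurable
        measurableSet_Ioo)
    ((ae_restrict_iff' measurableSet_Ioo).2 (ae_of_all _ fun x hx => ?_))
  have hsub : Icc c x ⊆ Ioo 0 b := fun t ht => ⟨hc.trans_le ht.1, ht.2.trans_lt hx.2⟩
  have hdiff := abs_sub_le_integral_abs_deriv hx.1.le (fun t ht => hg t (hsub ht))
    (hg'.mono hsub)
  have htail : ∫ t in c..x, |g' t| ≤ ∫ t in Ioo c b, |g' t| := by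
    rw [intervalIntegral.integral_of_le hx.1.le]
    exact setIntegral_mono_set hg'i (ae_of_all _ fun t => abs_nonneg _)
      (Ioc_subset_Ioo_right hx.2).eventuallyLE
  rw [norm_mul, norm_pow, Real.norm_of_nonneg (hc.trans hx.1).le, Real.norm_eq_abs]
  refine mul_le_mul_of_nonneg_left ?_ (pow_nonneg (hc.trans hx.1).le _)
  linarith [abs_sub_abs_le_abs_sub (g x) (g c)]

theorem integrableOn_pow_mul_of_integrableOn_pow_succ_mul_deriv
    (hg : ∀ x ∈ Ioo 0 b, HasDerivAt g (g' x) x) (hg' : ContinuousOn g' (Ioo 0 b))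
    (hint : IntegrableOn (fun x => x ^ (n + 1) * g' x) (Ioo 0 b)) :
    IntegrableOn (fun x => x ^ n * g x) (Ioo 0 b) := by
  rcases le_or_gt b 0 with hb | hb
  · simp [Ioo_eq_empty hb.not_gt]
  obtain ⟨c, hc, hcb⟩ : ∃ c, 0 < c ∧ c < b := ⟨b / 2, half_pos hb, half_lt_self hb⟩
  exact ((integrableOn_pow_mul_Ioc hcb hg hg' hint).union
    (integrableOn_pow_mul_Ioo hc hg hg' hint)).mono_set fun x hx =>
      (le_or_gt x c).imp (fun h => ⟨hx.1, h⟩) (fun h => ⟨h, hx.2⟩)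

end Step

theorem stmt4_general (k : ℕ) (F : ℕ → ℝ → ℝ)
    (hderiv : ∀ ℓ < k, ∀ x ∈ Set.Ioo (0 : ℝ) 1, HasDerivAt (F ℓ) (F (ℓ + 1) x) x)
    (hcont : ContinuousOn (F k) (Set.Ioo (0 : ℝ) 1))
    (hint : MeasureTheory.IntegrableOn (fun x : ℝ => x ^ k * F k x) (Set.Ioo 0 1)) :
    (∀ ℓ < k, MeasureTheory.IntegrableOn (fun x : ℝ => x ^ ℓ * F ℓ x) (Set.Ioo 0 1)) ∧
    (∀ ℓ : ℕ, 1 ≤ ℓ → ℓ ≤ k →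
      Filter.Tendsto (fun x : ℝ => x ^ ℓ * F (ℓ - 1) x)
        (nhdsWithin 0 (Set.Ioi 0)) (nhds 0)) := by
  have hcont_succ : ∀ m < k, ContinuousOn (F (m + 1)) (Ioo 0 1) := by
    intro m hm
    rcases (Nat.succ_le_of_lt hm).lt_or_eq with h | h
    · exact fun x hx => (hderiv (m + 1) h x hx).continuousAt.continuousWithinAt
    · rwa [← h] at hcont
  have hint_le : ∀ ℓ ≤ k, IntegrableOn (fun x : ℝ => x ^ ℓ * F ℓ x) (Ioo 0 1) := by
    intro ℓ hℓ
    induction hℓ using Nat.decreasingInduction with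
    | self => exact hint
    | of_succ m hm ih =>
      exact integrableOn_pow_mul_of_integrableOn_pow_succ_mul_deriv (hderiv m hm)
        (hcont_succ m hm) ih
  refine ⟨fun ℓ hℓ => hint_le ℓ hℓ.le, fun ℓ hℓ hℓk => ?_⟩
  obtain ⟨m, rfl⟩ : ∃ m, ℓ = m + 1 := ⟨ℓ - 1, by omega⟩
  simpa using tendsto_pow_succ_mul_of_integrableOn_pow_succ_mul_deriv one_pos (hderiv m hℓk)
    (hcont_succ m hℓk) (hint_le _ hℓk)

/-- Lemma 3.1 (singularity control at 0): if `f` is `C^k` on `(0,1)` (encoded via the family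
`F` of successive derivatives, `F 0 = f`) and `x ↦ x^k f^{(k)}(x)` is integrable on `(0,1)`,
then `x ↦ x^ℓ f^{(ℓ)}(x)` is integrable on `(0,1)` for `0 ≤ ℓ ≤ k-1`, and
`x^ℓ f^{(ℓ-1)}(x) → 0` as `x → 0⁺` for `1 ≤ ℓ ≤ k`. -/
theorem stmt4 (k : ℕ) (hk : 1 ≤ k) (f : ℝ → ℝ) (F : ℕ → ℝ → ℝ)
    (hF0 : F 0 = f)
    (hderiv : ∀ ℓ < k, ∀ x ∈ Set.Ioo (0 : ℝ) 1, HasDerivAt (F ℓ) (F (ℓ + 1) x) x)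
    (hcont : ContinuousOn (F k) (Set.Ioo (0 : ℝ) 1))
    (hint : MeasureTheory.IntegrableOn (fun x : ℝ => x ^ k * F k x) (Set.Ioo 0 1)) :
    (∀ ℓ < k, MeasureTheory.IntegrableOn (fun x : ℝ => x ^ ℓ * F ℓ x) (Set.Ioo 0 1)) ∧
    (∀ ℓ : ℕ, 1 ≤ ℓ → ℓ ≤ k →
      Filter.Tendsto (fun x : ℝ => x ^ ℓ * F (ℓ - 1) x)
        (nhdsWithin 0 (Set.Ioi 0)) (nhds 0)) :=
  stmt4_general k F hderiv hcont hint
end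

section
/- Let V : (0,∞) → ℝ be four times continuously differentiable, and for an integer ℓ ≥ 0 define 𝕍_ℓ(x) := sup_{y ∈ (x,∞)} |V^{(ℓ)}(y)|. Assume: V^{(ℓ)} is Lebesgue integrable on (1,∞) for ℓ = 0, 1, 2, 3; x ↦ x²·V''(x) is Lebesgue integrable on (0,1); x ↦ x³·𝕍₃(x) is Lebesgue integrable on (1,∞); and sup_{x > 1} x^{k+1}·|V^{(k)}(x)| < ∞ for k = 3, 4. Then for every c > 0: (i) x ↦ x^k V^{(k)}(x) is Lebesgue integrable on (0,∞) for k = 0, 1; (ii) x^{k+1}·𝕍_k(x) → 0 as x → 0⁺ for k = 0, 1; (iii) x ↦ x^k·𝕍_k(x) is Lebesgue integrable on (c,∞) for k = 0, 1, 2, 3; (iv) x^{k+1}·𝕍_k(x) → 0 as x → ∞ for k = 0, 1, 2; and (v) sup_{x > c} x^{k+1}·𝕍_k(x) < ∞ for k = 0, 1, 2, 3, 4. -/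
/-!
Write `𝕍_f(x) = sup_{y > x} |f y|`. Two elementary estimates drive everything. At infinity, if `f → 0`
and `f'` is integrable, then `f y = -∫_y^∞ f'`, so `𝕍_f(x) ≤ ∫_x^∞ |f'|`; near `0`, the fundamental
theorem of calculus gives `|f y| ≤ |f 1| + ∫_y^1 |f'|`. Both are combined with the Tonelli bound
`∫_S x^k ∫_{t ∈ S, t > x} h(t) dt dx ≤ ∫_S t^(k+1) h(t) dt` for `S ⊆ [0, ∞)`. On `(1, ∞)` it turns
integrability of `t^(k+1) 𝕍_{k+1}(t) ≥ t^(k+1) |V^(k+1)(t)|` into that of `x^k 𝕍_k(x)`, descending from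
`k = 3` (for `k ≤ 2`, `V^(k)` and `V^(k+1)` are integrable, so `V^(k) → 0`); on `(0, 1)` it turns
integrability of `t² V''` into that of `x V'`, and that into integrability of `V`. The limits at infinity
are tails of the integrable functions `t^(k+1) |V^(k+1)|`; at `0⁺`, `x^m ∫_x^1 |f'| → 0` by dominated
convergence, `x^m |f'(t)|` for `t > x` being dominated by `t^m |f'(t)|`. Boundedness on `(c, ∞)` follows
from the limits for `k ≤ 2` and from the hypothesis for `k = 3, 4`.
-/

/-- `supAbsOn g s = sup_{y ∈ s} |g y|` (as a real `sSup`). -/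
noncomputable def supAbsOn (g : ℝ → ℝ) (s : Set ℝ) : ℝ :=
  sSup ((fun y : ℝ => |g y|) '' s)

open MeasureTheory Set Filter Topology
open scoped ENNReal

section SupAbsOn

variable {g : ℝ → ℝ} {a c x y : ℝ} {n : ℕ}

-- Unconditional: `sSup` of a set of reals that is not bounded above is `0`.
lemma supAbsOn_nonneg (s : Set ℝ) : 0 ≤ supAbsOn g s :=
  Real.sSup_nonneg <| by rintro _ ⟨y, -, rfl⟩; exact abs_nonneg _

lemma abs_le_supAbsOn_Ioi (hb : BddAbove ((fun y => |g y|) '' Ioi x)) (hxy : x < y) :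
    |g y| ≤ supAbsOn g (Ioi x) :=
  le_csSup hb ⟨y, hxy, rfl⟩

lemma supAbsOn_Ioi_le {M : ℝ} (h : ∀ y, x < y → |g y| ≤ M) : supAbsOn g (Ioi x) ≤ M :=
  csSup_le (nonempty_Ioi.image _) <| by rintro _ ⟨y, hy, rfl⟩; exact h y hy

lemma supAbsOn_Ioi_anti (hb : BddAbove ((fun y => |g y|) '' Ioi x)) (hxy : x ≤ y) :
    supAbsOn g (Ioi y) ≤ supAbsOn g (Ioi x) :=
  csSup_le_csSup hb (nonempty_Ioi.image _) (image_mono (Ioi_subset_Ioi hxy))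

lemma abs_le_supAbsOn_Ioi_self (hb : BddAbove ((fun y => |g y|) '' Ioi x))
    (hg : ContinuousWithinAt g (Ioi x) x) : |g x| ≤ supAbsOn g (Ioi x) :=
  le_of_tendsto hg.abs <| eventually_nhdsWithin_of_forall fun _ hy => abs_le_supAbsOn_Ioi hb hy

lemma bddAbove_abs_image_Ioi (hg : ContinuousOn g (Ioi a)) (hax : a < x)
    (hbdd : IsBoundedUnder (· ≤ ·) atTop fun y => |g y|) :
    BddAbove ((fun y => |g y|) '' Ioi x) := by
  obtain ⟨M, hM⟩ := hbdd
  obtain ⟨X, hX⟩ := eventually_atTop.1 hM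
  obtain ⟨C, hC⟩ := isCompact_Icc.exists_bound_of_continuousOn
    (hg.mono fun t ht => hax.trans_le ht.1 : ContinuousOn g (Icc x X))
  refine ⟨max C M, ?_⟩
  rintro _ ⟨y, hy, rfl⟩
  rcases le_or_gt y X with hyX | hXy
  · exact (hC y ⟨hy.le, hyX⟩).trans (le_max_left _ _)
  · exact (hX y hXy.le).trans (le_max_right _ _)

lemma aestronglyMeasurable_supAbsOn_Ioi
    (hb : ∀ x, a < x → BddAbove ((fun y => |g y|) '' Ioi x)) :
    AEStronglyMeasurable (fun x => supAbsOn g (Ioi x)) (volume.restrict (Ioi a)) :=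
  (aemeasurable_restrict_of_antitoneOn measurableSet_Ioi
    fun _ hx _ _ hxy => supAbsOn_Ioi_anti (hb _ hx) hxy).aestronglyMeasurable

lemma integrableOn_pow_mul_of_supAbsOn (ha : 0 ≤ a)
    (hg : ContinuousOn g (Ioi a)) (hb : ∀ x, a < x → BddAbove ((fun y => |g y|) '' Ioi x))
    (h : IntegrableOn (fun x => x ^ n * supAbsOn g (Ioi x)) (Ioi a)) :
    IntegrableOn (fun x => x ^ n * g x) (Ioi a) := by
  refine h.mono' ((continuous_pow n).continuousOn.mul hg |>.aestronglyMeasurable measurableSet_Ioi)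
    ((ae_restrict_iff' measurableSet_Ioi).2 (.of_forall fun x hx => ?_))
  have hx0 : 0 ≤ x := ha.trans (le_of_lt hx)
  rw [norm_mul, norm_pow, Real.norm_of_nonneg hx0, Real.norm_eq_abs]
  gcongr
  exact abs_le_supAbsOn_Ioi_self (hb x hx) ((hg x hx).mono (Ioi_subset_Ioi (le_of_lt hx)))

lemma integrableOn_pow_mul_supAbsOn_Ioi_of_bddAbove (hc : 0 ≤ c)
    (hb : BddAbove ((fun y => |g y|) '' Ioi c)) {b : ℝ}
    (h : IntegrableOn (fun x => x ^ n * supAbsOn g (Ioi x)) (Ioi b)) :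
    IntegrableOn (fun x => x ^ n * supAbsOn g (Ioi x)) (Ioi c) := by
  refine (IntegrableOn.union (s := Ioc c b) ?_ h).mono_set
    fun x (hx : c < x) => (le_or_gt x b).imp (fun hxb => ⟨hx, hxb⟩) id
  refine Integrable.mono' (integrableOn_const (C := b ^ n * supAbsOn g (Ioi c))
    measure_Ioc_lt_top.ne) (((continuous_pow n).aestronglyMeasurable.mul
      (aestronglyMeasurable_supAbsOn_Ioi fun x hx => hb.mono (image_mono (Ioi_subset_Ioi hx.le))))
      |>.mono_set Ioc_subset_Ioi_self)
    ((ae_restrict_iff' measurableSet_Ioc).2 (.of_forall fun x hx => ?_))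
  have hx0 : 0 ≤ x := hc.trans (le_of_lt hx.1)
  rw [norm_mul, norm_pow, Real.norm_of_nonneg hx0, Real.norm_of_nonneg (supAbsOn_nonneg _)]
  exact mul_le_mul (pow_le_pow_left₀ hx0 hx.2 n) (supAbsOn_Ioi_anti hb (le_of_lt hx.1))
    (supAbsOn_nonneg _) (pow_nonneg (hx0.trans hx.2) n)

lemma pow_mul_supAbsOn_Ioi_le {M : ℝ} (hx : 0 < x) (h : ∀ y, x < y → y ^ n * |g y| ≤ M) :
    x ^ n * supAbsOn g (Ioi x) ≤ M := by
  have hxn : 0 < x ^ n := pow_pos hx n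
  rw [← le_div_iff₀' hxn]
  refine supAbsOn_Ioi_le fun y hxy => ?_
  rw [le_div_iff₀' hxn]
  exact (mul_le_mul_of_nonneg_right (pow_le_pow_left₀ hx.le hxy.le n) (abs_nonneg _)).trans
    (h y hxy)

lemma isBoundedUnder_abs_of_pow_mul_abs_le {M : ℝ} (h : ∀ x, 1 < x → x ^ n * |g x| ≤ M) :
    IsBoundedUnder (· ≤ ·) atTop fun x => |g x| :=
  isBoundedUnder_of_eventually_le (a := M) <| (eventually_gt_atTop 1).mono fun x hx =>
    (le_mul_of_one_le_left (abs_nonneg _) (one_le_pow₀ hx.le)).trans (h x hx)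

lemma isBoundedUnder_pow_mul_supAbsOn_of_pow_mul_abs_le {M : ℝ}
    (h : ∀ x, 1 < x → x ^ n * |g x| ≤ M) :
    IsBoundedUnder (· ≤ ·) atTop fun x => x ^ n * supAbsOn g (Ioi x) :=
  isBoundedUnder_of_eventually_le (a := M) <| (eventually_ge_atTop 1).mono fun _ hx =>
    pow_mul_supAbsOn_Ioi_le (one_pos.trans_le hx) fun y hy => h y (hx.trans_lt hy)

lemma exists_pow_mul_supAbsOn_Ioi_le (hc : 0 ≤ c) (hb : BddAbove ((fun y => |g y|) '' Ioi c))
    (h : IsBoundedUnder (· ≤ ·) atTop fun x => x ^ n * supAbsOn g (Ioi x)) :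
    ∃ M, ∀ x, c < x → x ^ n * supAbsOn g (Ioi x) ≤ M := by
  obtain ⟨M, hM⟩ := h
  obtain ⟨X, hX⟩ := eventually_atTop.1 hM
  refine ⟨max M (max X c ^ n * supAbsOn g (Ioi c)), fun x hcx => ?_⟩
  rcases le_or_gt x (max X c) with hxX | hXx
  · refine le_max_of_le_right ?_
    gcongr
    · exact supAbsOn_nonneg _
    · exact hc.trans hcx.le
    · exact supAbsOn_Ioi_anti hb hcx.le
  · exact le_max_of_le_left (hX x (le_of_lt (lt_of_le_of_lt (le_max_left X c) hXx)))

end SupAbsOn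

lemma lintegral_enorm_pow_mul_lintegral_Ioi_le {S : Set ℝ} (hS0 : S ⊆ Ici 0) {h : ℝ → ℝ≥0∞}
    (hh : AEMeasurable h (volume.restrict S)) (k : ℕ) :
    ∫⁻ x in S, ‖x‖ₑ ^ k * ∫⁻ t in S ∩ Ioi x, h t ≤ ∫⁻ t in S, ‖t‖ₑ ^ (k + 1) * h t := by
  set F : ℝ × ℝ → ℝ≥0∞ := {p | p.1 < p.2}.indicator fun p => ‖p.1‖ₑ ^ k * h p.2
  have hF : AEMeasurable F ((volume.restrict S).prod (volume.restrict S)) :=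
    ((measurable_fst.enorm.pow_const k).aemeasurable.mul hh.comp_snd).indicator
      (measurableSet_lt measurable_fst measurable_snd)
  have hinner (x : ℝ) : ‖x‖ₑ ^ k * ∫⁻ t in S ∩ Ioi x, h t = ∫⁻ t in S, F (x, t) := by
    rw [inter_comm, ← Measure.restrict_restrict measurableSet_Ioi,
      ← lintegral_indicator measurableSet_Ioi, ← lintegral_const_mul' _ _ (by simp)]
    congr 1 with t
    by_cases hxt : x < t <;> simp [F, hxt]
  have houter (t : ℝ) (ht : 0 ≤ t) : ∫⁻ x in S, F (x, t) ≤ ‖t‖ₑ ^ (k + 1) * h t :=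
    calc ∫⁻ x in S, F (x, t) ≤ ∫⁻ x in S, (Ico 0 t).indicator (fun _ => ‖t‖ₑ ^ k * h t) x := by
          refine setLIntegral_mono (measurable_const.indicator measurableSet_Ico) fun x hx => ?_
          by_cases hxt : x < t
          · have hx0 : 0 ≤ x := hS0 hx
            simp only [F, indicator_of_mem (show (x, t) ∈ {p : ℝ × ℝ | p.1 < p.2} from hxt),
              indicator_of_mem (show x ∈ Ico 0 t from ⟨hx0, hxt⟩)]
            gcongr
            simpa [Real.enorm_eq_ofReal, hx0, ht] using hxt.le
          · simp [F, hxt]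
      _ ≤ ∫⁻ x, (Ico 0 t).indicator (fun _ => ‖t‖ₑ ^ k * h t) x := setLIntegral_le_lintegral _ _
      _ = ‖t‖ₑ ^ (k + 1) * h t := by
          rw [lintegral_indicator_const measurableSet_Ico, Real.volume_Ico, sub_zero,
            ← Real.enorm_eq_ofReal ht, pow_succ]
          ring
  calc ∫⁻ x in S, ‖x‖ₑ ^ k * ∫⁻ t in S ∩ Ioi x, h t
      = ∫⁻ t in S, ∫⁻ x in S, F (x, t) := by
        simp_rw [hinner]; exact lintegral_lintegral_swap (f := fun x t => F (x, t)) hF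
    _ ≤ ∫⁻ t in S, ‖t‖ₑ ^ (k + 1) * h t :=
        setLIntegral_mono_ae (by fun_prop) (.of_forall fun t ht => houter t (hS0 ht))

section AtTop

variable {f f' : ℝ → ℝ} {a : ℝ}

lemma abs_le_integral_Ioi_norm_of_hasDerivAt (hf : ∀ x ∈ Ioi a, HasDerivAt f (f' x) x)
    (hf' : IntegrableOn f' (Ioi a)) (hlim : Tendsto f atTop (𝓝 0)) {x y : ℝ} (hax : a ≤ x)
    (hxy : x < y) : |f y| ≤ ∫ t in Ioi x, ‖f' t‖ := by
  have hrepr : ∫ t in Ioi y, f' t = 0 - f y :=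
    integral_Ioi_of_hasDerivAt_of_tendsto' (fun t ht => hf t (hax.trans_lt (hxy.trans_le ht)))
      (hf'.mono_set (Ioi_subset_Ioi (hax.trans hxy.le))) hlim
  calc |f y| = ‖∫ t in Ioi y, f' t‖ := by rw [hrepr, zero_sub, norm_neg, Real.norm_eq_abs]
    _ ≤ ∫ t in Ioi y, ‖f' t‖ := norm_integral_le_integral_norm _
    _ ≤ ∫ t in Ioi x, ‖f' t‖ :=
        setIntegral_mono_set (hf'.mono_set (Ioi_subset_Ioi hax)).norm
          (.of_forall fun _ => norm_nonneg _) (Ioi_subset_Ioi hxy.le).eventuallyLE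

lemma bddAbove_abs_image_Ioi_of_hasDerivAt (hf : ∀ x ∈ Ioi a, HasDerivAt f (f' x) x)
    (hf' : IntegrableOn f' (Ioi a)) (hlim : Tendsto f atTop (𝓝 0)) {x : ℝ} (hax : a ≤ x) :
    BddAbove ((fun y => |f y|) '' Ioi x) :=
  ⟨_, by rintro _ ⟨y, hy, rfl⟩; exact abs_le_integral_Ioi_norm_of_hasDerivAt hf hf' hlim hax hy⟩

lemma supAbsOn_Ioi_le_integral_Ioi_norm (hf : ∀ x ∈ Ioi a, HasDerivAt f (f' x) x)
    (hf' : IntegrableOn f' (Ioi a)) (hlim : Tendsto f atTop (𝓝 0)) {x : ℝ} (hax : a ≤ x) :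
    supAbsOn f (Ioi x) ≤ ∫ t in Ioi x, ‖f' t‖ :=
  supAbsOn_Ioi_le fun _ hy => abs_le_integral_Ioi_norm_of_hasDerivAt hf hf' hlim hax hy

lemma integrableOn_pow_mul_supAbsOn_Ioi (ha : 0 ≤ a) (hf : ∀ x ∈ Ioi a, HasDerivAt f (f' x) x)
    (hf' : IntegrableOn f' (Ioi a)) (hlim : Tendsto f atTop (𝓝 0)) {k : ℕ}
    (hk : IntegrableOn (fun t => t ^ (k + 1) * f' t) (Ioi a)) :
    IntegrableOn (fun x => x ^ k * supAbsOn f (Ioi x)) (Ioi a) := by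
  refine ⟨(continuous_pow k).aestronglyMeasurable.mul (aestronglyMeasurable_supAbsOn_Ioi
    fun x hx => bddAbove_abs_image_Ioi_of_hasDerivAt hf hf' hlim hx.le), ?_⟩
  have hpt : ∀ x ∈ Ioi a, ‖x ^ k * supAbsOn f (Ioi x)‖ₑ
      ≤ ‖x‖ₑ ^ k * ∫⁻ t in Ioi a ∩ Ioi x, ‖f' t‖ₑ := fun x hx => by
    rw [enorm_mul, enorm_pow, Ioi_inter_Ioi, max_eq_right (le_of_lt hx),
      ← ofReal_integral_norm_eq_lintegral_enorm (hf'.mono_set (Ioi_subset_Ioi (le_of_lt hx))),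
      Real.enorm_eq_ofReal (supAbsOn_nonneg _)]
    gcongr
    exact supAbsOn_Ioi_le_integral_Ioi_norm hf hf' hlim (le_of_lt hx)
  calc ∫⁻ x in Ioi a, ‖x ^ k * supAbsOn f (Ioi x)‖ₑ
      ≤ ∫⁻ x in Ioi a, ‖x‖ₑ ^ k * ∫⁻ t in Ioi a ∩ Ioi x, ‖f' t‖ₑ :=
        lintegral_mono_ae ((ae_restrict_iff' measurableSet_Ioi).2 (.of_forall hpt))
    _ ≤ ∫⁻ t in Ioi a, ‖t‖ₑ ^ (k + 1) * ‖f' t‖ₑ :=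
        lintegral_enorm_pow_mul_lintegral_Ioi_le (Ioi_subset_Ici_self.trans (Ici_subset_Ici.2 ha))
          hf'.aestronglyMeasurable.enorm k
    _ < ⊤ := by simpa only [hasFiniteIntegral_iff_enorm, enorm_mul, enorm_pow] using hk.2

lemma tendsto_pow_mul_supAbsOn_Ioi_atTop (ha : 0 ≤ a) (hf : ∀ x ∈ Ioi a, HasDerivAt f (f' x) x)
    (hf' : IntegrableOn f' (Ioi a)) (hlim : Tendsto f atTop (𝓝 0)) {n : ℕ}
    (hn : IntegrableOn (fun t => t ^ n * f' t) (Ioi a)) :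
    Tendsto (fun x => x ^ n * supAbsOn f (Ioi x)) atTop (𝓝 0) := by
  refine squeeze_zero' ?_ ?_ (tendsto_integral_Ioi_zero (μ := volume)
    (f := fun t => ‖t ^ n * f' t‖) tendsto_id)
  · filter_upwards [eventually_ge_atTop 0] with x hx
    exact mul_nonneg (pow_nonneg hx n) (supAbsOn_nonneg _)
  filter_upwards [eventually_ge_atTop a] with x hax
  have hx : 0 ≤ x := ha.trans hax
  calc x ^ n * supAbsOn f (Ioi x) ≤ x ^ n * ∫ t in Ioi x, ‖f' t‖ := by
        gcongr; exact supAbsOn_Ioi_le_integral_Ioi_norm hf hf' hlim hax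
    _ = ∫ t in Ioi x, x ^ n * ‖f' t‖ := (integral_const_mul _ _).symm
    _ ≤ ∫ t in Ioi x, ‖t ^ n * f' t‖ := by
        refine setIntegral_mono_on ((hf'.mono_set (Ioi_subset_Ioi hax)).norm.const_mul _)
          (hn.mono_set (Ioi_subset_Ioi hax)).norm measurableSet_Ioi fun t ht => ?_
        rw [norm_mul, norm_pow, Real.norm_of_nonneg (hx.trans (le_of_lt ht))]
        gcongr
        exact le_of_lt ht

end AtTop

lemma tendsto_pow_mul_integral_Ioo_norm_nhdsGT {h : ℝ → ℝ} {b : ℝ} {m : ℕ} (hm : m ≠ 0)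
    (hmeas : AEStronglyMeasurable h (volume.restrict (Ioo 0 b)))
    (hint : IntegrableOn (fun t => t ^ m * h t) (Ioo 0 b)) :
    Tendsto (fun x => x ^ m * ∫ t in Ioo x b, ‖h t‖) (𝓝[>] 0) (𝓝 0) := by
  set F : ℝ → ℝ → ℝ := fun x t => x ^ m * (Ioi x).indicator (fun t => ‖h t‖) t
  have hF : ∀ x ∈ Ioi (0 : ℝ), x ^ m * ∫ t in Ioo x b, ‖h t‖ = ∫ t in Ioo 0 b, F x t := by
    intro x hx
    rw [integral_const_mul, setIntegral_indicator measurableSet_Ioi, Ioo_inter_Ioi,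
      max_eq_right (le_of_lt hx)]
  have hlim : Tendsto (fun x => ∫ t in Ioo 0 b, F x t) (𝓝[>] 0) (𝓝 (∫ _ in Ioo 0 b, (0 : ℝ))) := by
    refine tendsto_integral_filter_of_dominated_convergence (fun t => ‖t ^ m * h t‖)
      (.of_forall fun x => (hmeas.norm.indicator measurableSet_Ioi).const_mul _) ?_ hint.norm ?_
    · filter_upwards [self_mem_nhdsWithin] with x (hx : 0 < x)
      refine (ae_restrict_iff' measurableSet_Ioo).2 (.of_forall fun t _ => ?_)
      by_cases hxt : x < t
      · simp only [F, indicator_of_mem (show t ∈ Ioi x from hxt), norm_mul, norm_pow, norm_norm,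
          Real.norm_of_nonneg hx.le, Real.norm_of_nonneg (hx.trans hxt).le]
        gcongr
      · simp only [F, indicator_of_notMem (show t ∉ Ioi x from hxt), mul_zero, norm_zero]
        exact norm_nonneg _
    · refine (ae_restrict_iff' measurableSet_Ioo).2 (.of_forall fun t ht => ?_)
      have hpow : Tendsto (fun x : ℝ => x ^ m * ‖h t‖) (𝓝[>] 0) (𝓝 0) :=
        ((show Continuous fun x : ℝ => x ^ m * ‖h t‖ by fun_prop).tendsto' 0 0
          (by simp [hm])).mono_left nhdsWithin_le_nhds
      refine hpow.congr' ?_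
      filter_upwards [Ioo_mem_nhdsGT ht.1] with x hx
      simp [F, indicator_of_mem (show t ∈ Ioi x from hx.2)]
  simpa using hlim.congr' (eventually_nhdsWithin_of_forall fun x hx => (hF x hx).symm)

section NearZero

variable {f f' : ℝ → ℝ} {b : ℝ}

lemma abs_le_abs_add_integral_Ioo_norm (hf : ∀ x ∈ Ioi 0, HasDerivAt f (f' x) x)
    (hf' : ContinuousOn f' (Ioi 0)) {y : ℝ} (hy : 0 < y) (hyb : y ≤ b) :
    |f y| ≤ |f b| + ∫ t in Ioo y b, ‖f' t‖ := by
  have hsub : uIcc y b ⊆ Ioi 0 := by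
    rw [uIcc_of_le hyb]; exact fun t ht => hy.trans_le ht.1
  have hftc : ∫ t in y..b, f' t = f b - f y :=
    intervalIntegral.integral_eq_sub_of_hasDerivAt (fun t ht => hf t (hsub ht))
      ((hf'.mono hsub).intervalIntegrable)
  calc |f y| = |f b - ∫ t in y..b, f' t| := by rw [hftc, sub_sub_cancel]
    _ ≤ |f b| + ‖∫ t in y..b, f' t‖ := abs_sub _ _
    _ ≤ |f b| + ∫ t in y..b, ‖f' t‖ := by
        gcongr; exact intervalIntegral.norm_integral_le_integral_norm hyb
    _ = |f b| + ∫ t in Ioo y b, ‖f' t‖ := by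
        rw [intervalIntegral.integral_of_le hyb, integral_Ioc_eq_integral_Ioo]

lemma tendsto_pow_mul_supAbsOn_Ioi_nhdsGT (hf : ∀ x ∈ Ioi 0, HasDerivAt f (f' x) x)
    (hf' : ContinuousOn f' (Ioi 0)) (hb0 : 0 < b) (hb : BddAbove ((fun y => |f y|) '' Ioi b))
    {m : ℕ} (hm : m ≠ 0) (hint : IntegrableOn (fun t => t ^ m * f' t) (Ioo 0 b)) :
    Tendsto (fun x => x ^ m * supAbsOn f (Ioi x)) (𝓝[>] 0) (𝓝 0) := by
  set A := supAbsOn f (Ioi b) + |f b|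
  have hbound : ∀ x ∈ Ioo 0 b, supAbsOn f (Ioi x) ≤ A + ∫ t in Ioo x b, ‖f' t‖ := by
    intro x hx
    refine supAbsOn_Ioi_le fun y hxy => ?_
    rcases le_or_gt y b with hyb | hby
    · have hmono : ∫ t in Ioo y b, ‖f' t‖ ≤ ∫ t in Ioo x b, ‖f' t‖ :=
        setIntegral_mono_set ((hf'.mono fun t ht => hx.1.trans_le ht.1).integrableOn_Icc.mono_set
          Ioo_subset_Icc_self).norm (.of_forall fun _ => norm_nonneg _)
          (Ioo_subset_Ioo_left hxy.le).eventuallyLE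
      linarith [abs_le_abs_add_integral_Ioo_norm hf hf' (hx.1.trans hxy) hyb,
        supAbsOn_nonneg (g := f) (Ioi b)]
    · have hI : 0 ≤ ∫ t in Ioo x b, ‖f' t‖ := integral_nonneg fun _ => norm_nonneg _
      linarith [abs_le_supAbsOn_Ioi hb hby, abs_nonneg (f b)]
  have hlim : Tendsto (fun x => x ^ m * A + x ^ m * ∫ t in Ioo x b, ‖f' t‖) (𝓝[>] 0) (𝓝 0) := by
    have hpow : Tendsto (fun x : ℝ => x ^ m * A) (𝓝[>] 0) (𝓝 0) :=
      ((show Continuous fun x : ℝ => x ^ m * A by fun_prop).tendsto' 0 0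
        (by simp [hm])).mono_left nhdsWithin_le_nhds
    simpa using hpow.add (tendsto_pow_mul_integral_Ioo_norm_nhdsGT hm
      (hf'.aestronglyMeasurable measurableSet_Ioi |>.mono_set Ioo_subset_Ioi_self) hint)
  refine squeeze_zero' ?_ ?_ hlim
  · filter_upwards [self_mem_nhdsWithin] with x (hx : 0 < x)
    exact mul_nonneg (pow_nonneg hx.le m) (supAbsOn_nonneg _)
  · filter_upwards [Ioo_mem_nhdsGT hb0] with x hx
    rw [← mul_add]
    exact mul_le_mul_of_nonneg_left (hbound x hx) (pow_nonneg hx.1.le m)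

lemma integrableOn_pow_mul_Ioo_of_hasDerivAt (hf : ∀ x ∈ Ioi 0, HasDerivAt f (f' x) x)
    (hf' : ContinuousOn f' (Ioi 0)) {k : ℕ}
    (hk : IntegrableOn (fun t => t ^ (k + 1) * f' t) (Ioo 0 b)) :
    IntegrableOn (fun x => x ^ k * f x) (Ioo 0 b) := by
  have hfc : ContinuousOn f (Ioi 0) := fun x hx => (hf x hx).continuousAt.continuousWithinAt
  refine ⟨((continuous_pow k).continuousOn.mul hfc).aestronglyMeasurable measurableSet_Ioi
    |>.mono_set Ioo_subset_Ioi_self, ?_⟩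
  have hconst : IntegrableOn (fun x => x ^ k * f b) (Ioo 0 b) :=
    (show Continuous fun x : ℝ => x ^ k * f b by fun_prop).integrableOn_Icc.mono_set
      Ioo_subset_Icc_self
  have hpt : ∀ x ∈ Ioo 0 b, ‖x ^ k * f x‖ₑ
      ≤ ‖x ^ k * f b‖ₑ + ‖x‖ₑ ^ k * ∫⁻ t in Ioo 0 b ∩ Ioi x, ‖f' t‖ₑ := fun x hx => by
    have hint : IntegrableOn f' (Ioo x b) :=
      (hf'.mono fun t ht => hx.1.trans_le ht.1).integrableOn_Icc.mono_set Ioo_subset_Icc_self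
    rw [enorm_mul, enorm_mul, enorm_pow, ← mul_add, Ioo_inter_Ioi, max_eq_right hx.1.le,
      ← ofReal_integral_norm_eq_lintegral_enorm hint, Real.enorm_eq_ofReal_abs (f x),
      Real.enorm_eq_ofReal_abs (f b),
      ← ENNReal.ofReal_add (abs_nonneg _) (integral_nonneg fun _ => norm_nonneg _)]
    gcongr
    exact abs_le_abs_add_integral_Ioo_norm hf hf' hx.1 hx.2.le
  calc ∫⁻ x in Ioo 0 b, ‖x ^ k * f x‖ₑ
      ≤ ∫⁻ x in Ioo 0 b, (‖x ^ k * f b‖ₑ + ‖x‖ₑ ^ k * ∫⁻ t in Ioo 0 b ∩ Ioi x, ‖f' t‖ₑ) :=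
        lintegral_mono_ae ((ae_restrict_iff' measurableSet_Ioo).2 (.of_forall hpt))
    _ = (∫⁻ x in Ioo 0 b, ‖x ^ k * f b‖ₑ)
          + ∫⁻ x in Ioo 0 b, ‖x‖ₑ ^ k * ∫⁻ t in Ioo 0 b ∩ Ioi x, ‖f' t‖ₑ :=
        lintegral_add_left (by fun_prop) _
    _ ≤ (∫⁻ x in Ioo 0 b, ‖x ^ k * f b‖ₑ) + ∫⁻ t in Ioo 0 b, ‖t‖ₑ ^ (k + 1) * ‖f' t‖ₑ :=
        add_le_add_right (lintegral_enorm_pow_mul_lintegral_Ioi_le (fun t ht => le_of_lt ht.1)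
          ((hf'.aestronglyMeasurable measurableSet_Ioi).mono_set Ioo_subset_Ioi_self).enorm k) _
    _ < ⊤ := by
        refine ENNReal.add_lt_top.2 ⟨hconst.2, ?_⟩
        simpa only [hasFiniteIntegral_iff_enorm, enorm_mul, enorm_pow] using hk.2

end NearZero

theorem stmt11_general (Vd : ℕ → ℝ → ℝ)
    (hderiv : ∀ ℓ < 4, ∀ x : ℝ, 0 < x → HasDerivAt (Vd ℓ) (Vd (ℓ + 1) x) x)
    (hcont : ContinuousOn (Vd 4) (Set.Ioi 0))
    (hinttail : ∀ ℓ ≤ 3, MeasureTheory.IntegrableOn (Vd ℓ) (Set.Ioi 1))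
    (hint2 : MeasureTheory.IntegrableOn
      (fun x : ℝ => x ^ 2 * Vd 2 x) (Set.Ioo 0 1))
    (hint3 : MeasureTheory.IntegrableOn
      (fun x : ℝ => x ^ 3 * supAbsOn (Vd 3) (Set.Ioi x)) (Set.Ioi 1))
    (hbdd : ∀ k : ℕ, 3 ≤ k → k ≤ 4 →
      ∃ M : ℝ, ∀ x : ℝ, 1 < x → x ^ (k + 1) * |Vd k x| ≤ M) :
    ∀ c : ℝ, 0 < c →
    (∀ k ≤ 1, MeasureTheory.IntegrableOn
      (fun x : ℝ => x ^ k * Vd k x) (Set.Ioi 0)) ∧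
    (∀ k ≤ 1,
      Filter.Tendsto (fun x : ℝ => x ^ (k + 1) * supAbsOn (Vd k) (Set.Ioi x))
        (nhdsWithin 0 (Set.Ioi 0)) (nhds 0)) ∧
    (∀ k ≤ 3, MeasureTheory.IntegrableOn
      (fun x : ℝ => x ^ k * supAbsOn (Vd k) (Set.Ioi x)) (Set.Ioi c)) ∧
    (∀ k ≤ 2,
      Filter.Tendsto (fun x : ℝ => x ^ (k + 1) * supAbsOn (Vd k) (Set.Ioi x))
        Filter.atTop (nhds 0)) ∧
    (∀ k ≤ 4, ∃ M : ℝ, ∀ x : ℝ, c < x →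
      x ^ (k + 1) * supAbsOn (Vd k) (Set.Ioi x) ≤ M) := by
  intro c hc
  have hderiv' (k : ℕ) (hk : k < 4) : ∀ x ∈ Ioi (1 : ℝ), HasDerivAt (Vd k) (Vd (k + 1) x) x :=
    fun x hx => hderiv k hk x (one_pos.trans hx)
  have hC (k : ℕ) (hk : k ≤ 4) : ContinuousOn (Vd k) (Ioi 0) := by
    rcases hk.lt_or_eq with hk | rfl
    · exact fun x hx => (hderiv k hk x hx).continuousAt.continuousWithinAt
    · exact hcont
  have hlim (k : ℕ) (hk : k ≤ 2) : Tendsto (Vd k) atTop (𝓝 0) :=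
    tendsto_zero_of_hasDerivAt_of_integrableOn_Ioi (hderiv' k (by omega))
      (hinttail (k + 1) (by omega)) (hinttail k (by omega))
  have hB (k : ℕ) (hk : k ≤ 4) (x : ℝ) (hx : 0 < x) : BddAbove ((fun y => |Vd k y|) '' Ioi x) := by
    refine bddAbove_abs_image_Ioi (hC k hk) hx ?_
    rcases le_or_gt k 2 with hk2 | hk2
    · exact (hlim k hk2).abs.isBoundedUnder_le
    · exact isBoundedUnder_abs_of_pow_mul_abs_le (hbdd k (by omega) hk).choose_spec
  have hpow (j k : ℕ) (hk : k ≤ 4)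
      (h : IntegrableOn (fun x => x ^ j * supAbsOn (Vd k) (Ioi x)) (Ioi 1)) :
      IntegrableOn (fun x => x ^ j * Vd k x) (Ioi 1) :=
    integrableOn_pow_mul_of_supAbsOn zero_le_one ((hC k hk).mono (Ioi_subset_Ioi zero_le_one))
      (fun x hx => hB k hk x (one_pos.trans hx)) h
  have hT (k : ℕ) (hk : k ≤ 3) :
      IntegrableOn (fun x => x ^ k * supAbsOn (Vd k) (Ioi x)) (Ioi 1) :=
    Nat.decreasingInduction
      (motive := fun k _ => IntegrableOn (fun x => x ^ k * supAbsOn (Vd k) (Ioi x)) (Ioi 1))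
      (fun j hj h => integrableOn_pow_mul_supAbsOn_Ioi zero_le_one (hderiv' j (by omega))
        (hinttail (j + 1) (by omega)) (hlim j (by omega)) (hpow _ _ (by omega) h)) hint3 hk
  have hiv (k : ℕ) (hk : k ≤ 2) :
      Tendsto (fun x => x ^ (k + 1) * supAbsOn (Vd k) (Ioi x)) atTop (𝓝 0) :=
    tendsto_pow_mul_supAbsOn_Ioi_atTop zero_le_one (hderiv' k (by omega))
      (hinttail (k + 1) (by omega)) (hlim k hk) (hpow _ _ (by omega) (hT (k + 1) (by omega)))
  have h01 : IntegrableOn (fun x => x ^ 1 * Vd 1 x) (Ioo 0 1) :=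
    integrableOn_pow_mul_Ioo_of_hasDerivAt (hderiv 1 (by omega)) (hC 2 (by omega)) hint2
  have h00 : IntegrableOn (fun x => x ^ 0 * Vd 0 x) (Ioo 0 1) :=
    integrableOn_pow_mul_Ioo_of_hasDerivAt (hderiv 0 (by omega)) (hC 1 (by omega)) h01
  refine ⟨fun k hk => ?_, fun k hk => ?_, fun k hk => ?_, hiv, fun k hk => ?_⟩
  · have hIoc : IntegrableOn (fun x => x ^ k * Vd k x) (Ioc 0 1) := by
      rw [integrableOn_Ioc_iff_integrableOn_Ioo]
      interval_cases k
      exacts [h00, h01]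
    rw [← Ioc_union_Ioi_eq_Ioi zero_le_one]
    exact hIoc.union (hpow k k (by omega) (hT k (by omega)))
  · refine tendsto_pow_mul_supAbsOn_Ioi_nhdsGT (hderiv k (by omega)) (hC (k + 1) (by omega))
      one_pos (hB k (by omega) 1 one_pos) k.succ_ne_zero ?_
    interval_cases k
    exacts [h01, hint2]
  · exact integrableOn_pow_mul_supAbsOn_Ioi_of_bddAbove hc.le (hB k (by omega) c hc) (hT k hk)
  · refine exists_pow_mul_supAbsOn_Ioi_le hc.le (hB k hk c hc) ?_
    rcases le_or_gt k 2 with hk2 | hk2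
    · exact (hiv k hk2).isBoundedUnder_le
    · exact isBoundedUnder_pow_mul_supAbsOn_of_pow_mul_abs_le (hbdd k (by omega) hk).choose_spec

/-- Corollary 4.6: consequences of the assumptions on `V` used for the regime `m = 3`.
`V` is `C⁴` on `(0,∞)` (encoded via the derivative family `Vd`, `Vd 0 = V`), and
`𝕍_ℓ(x) = supAbsOn (Vd ℓ) (Ioi x)`. -/
theorem stmt11 (V : ℝ → ℝ) (Vd : ℕ → ℝ → ℝ)
    (hVd0 : Vd 0 = V)
    (hderiv : ∀ ℓ < 4, ∀ x : ℝ, 0 < x → HasDerivAt (Vd ℓ) (Vd (ℓ + 1) x) x)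
    (hcont : ContinuousOn (Vd 4) (Set.Ioi 0))
    (hinttail : ∀ ℓ ≤ 3, MeasureTheory.IntegrableOn (Vd ℓ) (Set.Ioi 1))
    (hint2 : MeasureTheory.IntegrableOn
      (fun x : ℝ => x ^ 2 * Vd 2 x) (Set.Ioo 0 1))
    (hint3 : MeasureTheory.IntegrableOn
      (fun x : ℝ => x ^ 3 * supAbsOn (Vd 3) (Set.Ioi x)) (Set.Ioi 1))
    (hbdd : ∀ k : ℕ, 3 ≤ k → k ≤ 4 →
      ∃ M : ℝ, ∀ x : ℝ, 1 < x → x ^ (k + 1) * |Vd k x| ≤ M) :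
    ∀ c : ℝ, 0 < c →
    (∀ k ≤ 1, MeasureTheory.IntegrableOn
      (fun x : ℝ => x ^ k * Vd k x) (Set.Ioi 0)) ∧
    (∀ k ≤ 1,
      Filter.Tendsto (fun x : ℝ => x ^ (k + 1) * supAbsOn (Vd k) (Set.Ioi x))
        (nhdsWithin 0 (Set.Ioi 0)) (nhds 0)) ∧
    (∀ k ≤ 3, MeasureTheory.IntegrableOn
      (fun x : ℝ => x ^ k * supAbsOn (Vd k) (Set.Ioi x)) (Set.Ioi c)) ∧
    (∀ k ≤ 2,
      Filter.Tendsto (fun x : ℝ => x ^ (k + 1) * supAbsOn (Vd k) (Set.Ioi x))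
        Filter.atTop (nhds 0)) ∧
    (∀ k ≤ 4, ∃ M : ℝ, ∀ x : ℝ, c < x →
      x ^ (k + 1) * supAbsOn (Vd k) (Set.Ioi x) ≤ M) :=
  stmt11_general Vd hderiv hcont hinttail hint2 hint3 hbdd
end

section
/- Let V : (0,∞) → ℝ be twice continuously differentiable with V''(z) ≥ 0 for all z > 0, define 𝕍₂(x) := sup_{y ∈ (x,∞)} |V''(y)|, and assume that 𝕍₂(x) < ∞ for every x > 0 and that z ↦ z²·𝕍₂(z) is Lebesgue integrable on (1,∞). Then for every x > 0 the series Ψ(x) := Σ_{k=1}^{∞} k²·V''(kx) converges, and for every R > 1 the partial sums x ↦ Σ_{k=1}^{n} k²·V''(kx) converge uniformly on the interval [1/R, R] as n → ∞. -/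
/-!
On `[1/R, R]` every term is dominated by `k² 𝕍₂(k a)` with `a = 1/(2R)`, since `𝕍₂` bounds
`|V''|` to the right of its argument; by the Weierstrass M-test it suffices that these majorants
are summable. As `𝕍₂` is nonnegative and antitone, `(m+1)² 𝕍₂((m+1)a)` is at most `4/a³` times
the integral of `z² 𝕍₂(z)` over `(m a, (m+1) a]` for `m ≥ 1`, and these integrals are summable
because `z² 𝕍₂(z)` is integrable on `(1,∞)`.
-/

open MeasureTheory Set

lemma summable_setIntegral_Ioc_of_monotone {E : Type*} [NormedAddCommGroup E] [NormedSpace ℝ E]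
    {g : ℝ → E} {s : Set ℝ} {c : ℕ → ℝ} (hc : Monotone c)
    (hcs : ∀ n, Ioc (c n) (c (n + 1)) ⊆ s) (hg : IntegrableOn g s) :
    Summable fun n => ∫ z in Ioc (c n) (c (n + 1)), g z :=
  (hasSum_integral_iUnion (fun _ => measurableSet_Ioc) hc.pairwise_disjoint_on_Ioc_succ
    (hg.mono_set (iUnion_subset hcs))).summable

lemma sq_mul_le_setIntegral_Ioc {W : ℝ → ℝ} (hW : AntitoneOn W (Ioi 0))
    (hnn : ∀ x, 0 < x → 0 ≤ W x) {a m : ℝ} (ha : 0 < a) (hm : 1 ≤ m)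
    (hint : IntegrableOn (fun z => z ^ 2 * W z) (Ioc (m * a) ((m + 1) * a))) :
    a ^ 3 / 4 * ((m + 1) ^ 2 * W ((m + 1) * a)) ≤
      ∫ z in Ioc (m * a) ((m + 1) * a), z ^ 2 * W z := by
  have hlow : ∀ z ∈ Ioc (m * a) ((m + 1) * a),
      ((m + 1) * a / 2) ^ 2 * W ((m + 1) * a) ≤ z ^ 2 * W z := by
    rintro z ⟨hz, hz'⟩
    have hmz : (m + 1) * a / 2 ≤ z := by nlinarith
    have hz0 : 0 < z := by nlinarith
    gcongr
    · exact hnn _ (by positivity)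
    · exact hW hz0 (mem_Ioi.2 (hz0.trans_le hz')) hz'
  calc a ^ 3 / 4 * ((m + 1) ^ 2 * W ((m + 1) * a))
      = ((m + 1) * a / 2) ^ 2 * W ((m + 1) * a) * volume.real (Ioc (m * a) ((m + 1) * a)) := by
        rw [Real.volume_real_Ioc_of_le (by nlinarith)]; ring
    _ ≤ _ := setIntegral_ge_of_const_le_real measurableSet_Ioc measure_Ioc_lt_top.ne hlow hint

lemma summable_sq_mul_of_antitoneOn {W : ℝ → ℝ} (hW : AntitoneOn W (Ioi 0))
    (hnn : ∀ x, 0 < x → 0 ≤ W x) (hint : IntegrableOn (fun z => z ^ 2 * W z) (Ioi 1))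
    {a : ℝ} (ha : 0 < a) :
    Summable fun k : ℕ => (k : ℝ) ^ 2 * W (k * a) := by
  obtain ⟨N, hN⟩ := exists_nat_ge (max 1 (1 / a))
  have hN1 : (1 : ℝ) ≤ N := (le_max_left _ _).trans hN
  have hNa : 1 ≤ (N : ℝ) * a := by
    have := (le_max_right _ _).trans hN
    rwa [div_le_iff₀ ha] at this
  set c : ℕ → ℝ := fun j => (j + N : ℝ) * a
  have hc : Monotone c := fun i j hij => by
    simp only [c]; gcongr
  have hcs : ∀ j, Ioc (c j) (c (j + 1)) ⊆ Ioi 1 := fun j z hz => by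
    have : (N : ℝ) * a ≤ c j := by simp only [c]; gcongr; exact le_add_of_nonneg_left j.cast_nonneg
    exact mem_Ioi.2 (by linarith [hz.1])
  rw [← summable_nat_add_iff (N + 1), ← summable_mul_left_iff (a := a ^ 3 / 4) (by positivity)]
  refine Summable.of_nonneg_of_le (fun j => ?_) (fun j => ?_)
    (summable_setIntegral_Ioc_of_monotone hc hcs hint)
  · exact mul_nonneg (by positivity) (mul_nonneg (sq_nonneg _) (hnn _ (by positivity)))
  · have hcj : c (j + 1) = ((j + N : ℝ) + 1) * a := by simp only [c]; push_cast; ring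
    have key := sq_mul_le_setIntegral_Ioc hW hnn ha (m := j + N)
      (by linarith [j.cast_nonneg (α := ℝ)]) (hint.mono_set (hcj ▸ hcs j))
    rw [hcj]
    simpa only [c, Nat.cast_add, Nat.cast_one, add_assoc] using key

section TailSup

variable {f : ℝ → ℝ} (hf : ∀ x, 0 < x → BddAbove ((fun y => |f y|) '' Ioi x))
include hf

lemma abs_le_sSup_image_Ioi {x y : ℝ} (hx : 0 < x) (hxy : x < y) :
    |f y| ≤ sSup ((fun y => |f y|) '' Ioi x) :=
  le_csSup (hf x hx) ⟨y, hxy, rfl⟩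

lemma sSup_image_Ioi_nonneg {x : ℝ} (hx : 0 < x) : 0 ≤ sSup ((fun y => |f y|) '' Ioi x) :=
  (abs_nonneg _).trans (abs_le_sSup_image_Ioi hf hx (lt_add_one x))

lemma antitoneOn_sSup_image_Ioi : AntitoneOn (fun x => sSup ((fun y => |f y|) '' Ioi x)) (Ioi 0) :=
  fun x hx _ _ hxy =>
    csSup_le_csSup (hf x hx) ((nonempty_Ioi).image _) (image_mono (Ioi_subset_Ioi hxy))

lemma norm_sq_mul_le_sq_mul_sSup_image_Ioi {a x : ℝ} (ha : 0 < a) (hax : a < x) (k : ℕ) :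
    ‖(k : ℝ) ^ 2 * f (k * x)‖ ≤ (k : ℝ) ^ 2 * sSup ((fun y => |f y|) '' Ioi (k * a)) := by
  rw [norm_mul, norm_pow, Real.norm_natCast, Real.norm_eq_abs]
  rcases k.eq_zero_or_pos with rfl | hk
  · simp
  have hk : (0 : ℝ) < k := by exact_mod_cast hk
  gcongr
  exact abs_le_sSup_image_Ioi hf (by positivity) (by gcongr)

end TailSup

theorem stmt13_general (V'' : ℝ → ℝ)
    (𝕍₂ : ℝ → ℝ) (h𝕍 : ∀ x : ℝ, 𝕍₂ x = sSup ((fun y : ℝ => |V'' y|) '' Set.Ioi x))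
    (hfin : ∀ x : ℝ, 0 < x → BddAbove ((fun y : ℝ => |V'' y|) '' Set.Ioi x))
    (hint : MeasureTheory.IntegrableOn (fun z : ℝ => z ^ 2 * 𝕍₂ z) (Set.Ioi 1)) :
    (∀ x : ℝ, 0 < x → Summable (fun k : ℕ => (k : ℝ) ^ 2 * V'' (k * x))) ∧
    (∀ R : ℝ, 1 < R →
      TendstoUniformlyOn
        (fun n : ℕ => fun x : ℝ => ∑ k ∈ Finset.range n, (k : ℝ) ^ 2 * V'' (k * x))
        (fun x : ℝ => ∑' k : ℕ, (k : ℝ) ^ 2 * V'' (k * x))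
        Filter.atTop (Set.Icc (1 / R) R)) := by
  simp only [h𝕍] at hint
  have hmajorant : ∀ a, 0 < a →
      Summable fun k : ℕ => (k : ℝ) ^ 2 * sSup ((fun y => |V'' y|) '' Ioi (k * a)) :=
    fun a ha => summable_sq_mul_of_antitoneOn (antitoneOn_sSup_image_Ioi hfin)
      (fun _ => sSup_image_Ioi_nonneg hfin) hint ha
  refine ⟨fun x hx => ?_, fun R hR => ?_⟩
  · exact (hmajorant (x / 2) (by positivity)).of_norm_bounded
      (norm_sq_mul_le_sq_mul_sSup_image_Ioi hfin (by positivity) (by linarith))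
  · have hR0 : 0 < R := by linarith
    refine tendstoUniformlyOn_tsum_nat (hmajorant (1 / (2 * R)) (by positivity))
      fun k x hx => norm_sq_mul_le_sq_mul_sSup_image_Ioi hfin (by positivity) ?_ k
    calc 1 / (2 * R) < 1 / R := by gcongr; linarith
      _ ≤ x := hx.1

/-- Uniform-convergence part of Lemma 4.7: for `V` `C²` on `(0,∞)` with `V'' ≥ 0`, if
`𝕍₂(x) = sup_{y > x} |V''(y)|` is finite for all `x > 0` and `z ↦ z² 𝕍₂(z)` is integrable
on `(1,∞)`, then `Ψ(x) = Σ_{k≥1} k² V''(kx)` converges for every `x > 0`, and its partial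
sums converge uniformly on `[1/R, R]` for every `R > 1`. -/
theorem stmt13 (V V' V'' : ℝ → ℝ)
    (hderiv1 : ∀ z : ℝ, 0 < z → HasDerivAt V (V' z) z)
    (hderiv2 : ∀ z : ℝ, 0 < z → HasDerivAt V' (V'' z) z)
    (hcont : ContinuousOn V'' (Set.Ioi 0))
    (hconv : ∀ z : ℝ, 0 < z → 0 ≤ V'' z)
    (𝕍₂ : ℝ → ℝ) (h𝕍 : ∀ x : ℝ, 𝕍₂ x = sSup ((fun y : ℝ => |V'' y|) '' Set.Ioi x))
    (hfin : ∀ x : ℝ, 0 < x → BddAbove ((fun y : ℝ => |V'' y|) '' Set.Ioi x))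
    (hint : MeasureTheory.IntegrableOn (fun z : ℝ => z ^ 2 * 𝕍₂ z) (Set.Ioi 1)) :
    (∀ x : ℝ, 0 < x → Summable (fun k : ℕ => (k : ℝ) ^ 2 * V'' (k * x))) ∧
    (∀ R : ℝ, 1 < R →
      TendstoUniformlyOn
        (fun n : ℕ => fun x : ℝ => ∑ k ∈ Finset.range n, (k : ℝ) ^ 2 * V'' (k * x))
        (fun x : ℝ => ∑' k : ℕ, (k : ℝ) ^ 2 * V'' (k * x))
        Filter.atTop (Set.Icc (1 / R) R)) :=
  stmt13_general V'' 𝕍₂ h𝕍 hfin hint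
end

section
/- Let V : (0,∞) → ℝ be twice continuously differentiable with V''(z) ≥ 0 for all z > 0, define 𝕍₂(x) := sup_{y ∈ (x,∞)} |V''(y)|, and assume that 𝕍₂(x) < ∞ for every x > 0 and that z ↦ z²·𝕍₂(z) is Lebesgue integrable on (1,∞). Then there exists a constant C > 0 such that for all y ∈ (0,1): Σ_{k=1}^{∞} (k²/y²)·V''(k/y) ≤ C·y. In particular, the function f₃ defined by f₃(y) := (1/y²)·Σ_{k=1}^{∞} k² V''(k/y) for y ≠ 0 and f₃(0) := 0 satisfies f₃ ≥ 0 and is continuous at 0. -/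
/-!
Every `V''(k/y)` is dominated by `𝕍₂(z)` for `z` slightly to the left of `k/y`. Comparing the
`k`-th term with the integral of `z² 𝕍₂(z)` over the disjoint intervals `((k - 1/2)/y, k/y)`,
each of length `1/(2y)`, bounds the series by `8 y ∫_{1/2}^∞ z² 𝕍₂(z) dz`; on `(1/2, 1]` the
integrand is integrable because `𝕍₂` is antitone. Since `V''` is even, `f₃(y)` is the series
at `|y|`, so `0 ≤ f₃(y) ≤ C |y|` near `0`.
-/

open MeasureTheory Set Filter Topology

/-- The paper's `𝕍₂` is `supEnvelope V''`. -/
noncomputable def supEnvelope (F : ℝ → ℝ) (x : ℝ) : ℝ :=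
  sSup ((fun y => |F y|) '' Ioi x)

section supEnvelope

variable {F : ℝ → ℝ}

theorem le_supEnvelope {z w : ℝ} (hF : BddAbove ((fun y => |F y|) '' Ioi z)) (hzw : z < w) :
    F w ≤ supEnvelope F z :=
  (le_abs_self _).trans (le_csSup hF ⟨w, hzw, rfl⟩)

theorem supEnvelope_antitoneOn (hF : ∀ x, 0 < x → BddAbove ((fun y => |F y|) '' Ioi x)) :
    AntitoneOn (supEnvelope F) (Ioi 0) := fun _ hx _ _ hxy =>
  csSup_le_csSup (hF _ hx) (nonempty_Ioi.image _) (image_mono (Ioi_subset_Ioi hxy))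

end supEnvelope

theorem integrableOn_Ioi_mul_of_antitoneOn {g E : ℝ → ℝ} {a b : ℝ} (hab : a ≤ b)
    (hg : Continuous g) (hE : AntitoneOn E (Icc a b))
    (hint : IntegrableOn (fun z => g z * E z) (Ioi b)) :
    IntegrableOn (fun z => g z * E z) (Ioi a) := by
  have hIcc : IntegrableOn (fun z => g z * E z) (Icc a b) :=
    (hE.integrableOn_isCompact isCompact_Icc).continuousOn_mul hg.continuousOn isCompact_Icc
  rw [← Ioc_union_Ioi_eq_Ioi hab]
  exact (hIcc.mono_set Ioc_subset_Icc_self).union hint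

theorem Function.Even.apply_div_abs {F : ℝ → ℝ} (hF : F.Even) (t y : ℝ) :
    F (t / |y|) = F (t / y) := by
  rcases abs_choice y with h | h <;> rw [h]
  rw [div_neg, hF]

section SeriesBound

variable {F E : ℝ → ℝ} {y : ℝ}

theorem sq_div_mul_le_setIntegral (hF : ∀ z, 0 < z → 0 ≤ F z)
    (hFE : ∀ z w, 0 < z → z < w → F w ≤ E z) (hy : 0 < y) (k : ℕ)
    (hint : IntegrableOn (fun z => z ^ 2 * E z) (Ioo ((k + 1 / 2) / y) ((k + 1) / y))) :
    ((k : ℝ) + 1) ^ 2 / y ^ 2 * F ((k + 1) / y) ≤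
      8 * y * ∫ z in Ioo ((k + 1 / 2) / y) ((k + 1) / y), z ^ 2 * E z := by
  have hk : (0 : ℝ) ≤ k := k.cast_nonneg
  have hFk : 0 ≤ F ((k + 1) / y) := hF _ (by positivity)
  have hlow : ∀ z ∈ Ioo ((k + 1 / 2) / y) ((k + 1) / y),
      ((k : ℝ) + 1) ^ 2 / (4 * y ^ 2) * F ((k + 1) / y) ≤ z ^ 2 * E z := by
    rintro z ⟨hz_left, hz_right⟩
    have hz : ((k : ℝ) + 1) / (2 * y) ≤ z := by
      refine le_trans ?_ hz_left.le
      rw [div_le_div_iff₀ (by positivity) hy]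
      nlinarith
    have hsq : ((k : ℝ) + 1) ^ 2 / (4 * y ^ 2) ≤ z ^ 2 := by
      calc ((k : ℝ) + 1) ^ 2 / (4 * y ^ 2) = (((k : ℝ) + 1) / (2 * y)) ^ 2 := by ring
        _ ≤ z ^ 2 := pow_le_pow_left₀ (by positivity) hz 2
    calc ((k : ℝ) + 1) ^ 2 / (4 * y ^ 2) * F ((k + 1) / y) ≤ z ^ 2 * F ((k + 1) / y) :=
          mul_le_mul_of_nonneg_right hsq hFk
      _ ≤ z ^ 2 * E z :=
          mul_le_mul_of_nonneg_left (hFE z _ ((by positivity : (0 : ℝ) < _).trans hz_left)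
            hz_right) (sq_nonneg z)
  have hvol : volume.real (Ioo (((k : ℝ) + 1 / 2) / y) ((k + 1) / y)) = 1 / (2 * y) := by
    rw [Real.volume_real_Ioo_of_le (by gcongr; linarith)]
    field_simp
    ring
  have := setIntegral_ge_of_const_le_real measurableSet_Ioo measure_Ioo_lt_top.ne hlow hint
  rw [hvol] at this
  calc ((k : ℝ) + 1) ^ 2 / y ^ 2 * F ((k + 1) / y)
      = 8 * y * (((k : ℝ) + 1) ^ 2 / (4 * y ^ 2) * F ((k + 1) / y) * (1 / (2 * y))) := by
        field_simp
        ring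
    _ ≤ _ := by gcongr

theorem tsum_sq_div_mul_le (hF : ∀ z, 0 < z → 0 ≤ F z)
    (hFE : ∀ z w, 0 < z → z < w → F w ≤ E z)
    (hint : IntegrableOn (fun z => z ^ 2 * E z) (Ioi (1 / 2))) (hy : 0 < y) (hy1 : y ≤ 1) :
    ∑' k : ℕ, ((k : ℝ) + 1) ^ 2 / y ^ 2 * F ((k + 1) / y) ≤
      (8 * ∫ z in Ioi (1 / 2), z ^ 2 * E z) * y := by
  set J : ℕ → Set ℝ := fun k => Ioo ((k + 1 / 2) / y) ((k + 1) / y)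
  have hJ : (⋃ k, J k) ⊆ Ioi (1 / 2) := by
    refine iUnion_subset fun k z hz => lt_of_le_of_lt ?_ hz.1
    rw [le_div_iff₀ hy]
    have : (0 : ℝ) ≤ k := k.cast_nonneg
    linarith
  have hdisj : Pairwise (Function.onFun Disjoint J) := by
    have hmono : Monotone fun k : ℕ => ((k : ℝ) + 1 / 2) / y := fun i j hij => by
      dsimp only
      gcongr
    refine hmono.pairwise_disjoint_on_Ioc_succ.mono fun i j h => h.mono ?_ ?_ <;>
    · refine Ioo_subset_Ioc_self.trans (Ioc_subset_Ioc_right ?_)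
      simp only [Order.succ_eq_add_one, Nat.cast_add, Nat.cast_one]
      exact div_le_div_of_nonneg_right (by linarith) hy.le
  have hg_nonneg : ∀ z ∈ Ioi (1 / 2 : ℝ), 0 ≤ z ^ 2 * E z := fun z hz => by
    have hz : (0 : ℝ) < z := lt_trans (by norm_num) hz
    exact mul_nonneg (sq_nonneg z) ((hF _ (by linarith)).trans (hFE z (z + 1) hz (by linarith)))
  have hsum := hasSum_integral_iUnion (fun _ => measurableSet_Ioo) hdisj (hint.mono_set hJ)
  have hterm k :=
    sq_div_mul_le_setIntegral hF hFE hy k (hint.mono_set ((subset_iUnion J k).trans hJ))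
  have hsummable : Summable fun k => 8 * y * ∫ z in J k, z ^ 2 * E z := hsum.summable.mul_left _
  calc ∑' k : ℕ, ((k : ℝ) + 1) ^ 2 / y ^ 2 * F ((k + 1) / y)
      ≤ ∑' k, 8 * y * ∫ z in J k, z ^ 2 * E z :=
        (Summable.of_nonneg_of_le (fun k => mul_nonneg (by positivity) (hF _ (by positivity)))
          hterm hsummable).tsum_le_tsum hterm hsummable
    _ = 8 * y * ∫ z in ⋃ k, J k, z ^ 2 * E z := by rw [tsum_mul_left, hsum.tsum_eq]
    _ ≤ 8 * y * ∫ z in Ioi (1 / 2), z ^ 2 * E z := by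
        refine mul_le_mul_of_nonneg_left (setIntegral_mono_set hint ?_ hJ.eventuallyLE)
          (by positivity)
        exact (ae_restrict_iff' measurableSet_Ioi).mpr (Eventually.of_forall hg_nonneg)
    _ = (8 * ∫ z in Ioi (1 / 2), z ^ 2 * E z) * y := by ring

end SeriesBound

theorem continuousAt_zero_of_le_mul_abs {f : ℝ → ℝ} {C : ℝ} (h0 : f 0 = 0)
    (hnn : ∀ y, 0 ≤ f y) (hle : ∀ᶠ y in 𝓝 0, f y ≤ C * |y|) : ContinuousAt f 0 := by
  rw [ContinuousAt, h0]
  refine squeeze_zero' (Eventually.of_forall hnn) hle ?_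
  simpa using (tendsto_const_nhds (x := C)).mul (continuous_abs.tendsto (0 : ℝ))

theorem stmt14_general (V'' : ℝ → ℝ)
    (hconv : ∀ z : ℝ, 0 < z → 0 ≤ V'' z)
    (heven : ∀ z : ℝ, V'' (-z) = V'' z)
    (𝕍₂ : ℝ → ℝ) (h𝕍 : ∀ x : ℝ, 𝕍₂ x = sSup ((fun y : ℝ => |V'' y|) '' Set.Ioi x))
    (hfin : ∀ x : ℝ, 0 < x → BddAbove ((fun y : ℝ => |V'' y|) '' Set.Ioi x))
    (hint : MeasureTheory.IntegrableOn (fun z : ℝ => z ^ 2 * 𝕍₂ z) (Set.Ioi 1))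
    (f₃ : ℝ → ℝ)
    (hf₃ : ∀ y : ℝ, y ≠ 0 → f₃ y = (1 / y ^ 2) * ∑' k : ℕ, ((k : ℝ) + 1) ^ 2 * V'' (((k : ℝ) + 1) / y))
    (hf₃0 : f₃ 0 = 0) :
    (∃ C : ℝ, 0 < C ∧ ∀ y : ℝ, 0 < y → y < 1 →
      ∑' k : ℕ, ((k : ℝ) + 1) ^ 2 / y ^ 2 * V'' (((k : ℝ) + 1) / y) ≤ C * y) ∧
    (∀ y : ℝ, 0 ≤ f₃ y) ∧ ContinuousAt f₃ 0 := by
  obtain rfl : 𝕍₂ = supEnvelope V'' := funext h𝕍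
  have hint' : IntegrableOn (fun z => z ^ 2 * supEnvelope V'' z) (Ioi (1 / 2)) :=
    integrableOn_Ioi_mul_of_antitoneOn (by norm_num) (continuous_pow 2)
      ((supEnvelope_antitoneOn hfin).mono fun z hz => lt_of_lt_of_le (by norm_num) hz.1) hint
  set I := ∫ z in Ioi (1 / 2), z ^ 2 * supEnvelope V'' z
  have hbound y (hy : 0 < y) (hy1 : y ≤ 1) :=
    tsum_sq_div_mul_le hconv (fun z w hz => le_supEnvelope (hfin z hz)) hint' hy hy1
  have hf₃_eq y (hy : y ≠ 0) :
      f₃ y = ∑' k : ℕ, ((k : ℝ) + 1) ^ 2 / |y| ^ 2 * V'' (((k : ℝ) + 1) / |y|) := by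
    rw [hf₃ y hy, ← tsum_mul_left]
    refine tsum_congr fun k => ?_
    rw [Function.Even.apply_div_abs heven, sq_abs]
    ring
  have hf₃_nonneg y : 0 ≤ f₃ y := by
    rcases eq_or_ne y 0 with rfl | hy
    · exact hf₃0.ge
    rw [hf₃_eq y hy]
    exact tsum_nonneg fun k => mul_nonneg (by positivity) (hconv _ (by positivity))
  refine ⟨⟨max (8 * I) 1, lt_max_of_lt_right one_pos, fun y hy hy1 =>
    (hbound y hy hy1.le).trans (mul_le_mul_of_nonneg_right (le_max_left _ _) hy.le)⟩,
    hf₃_nonneg, continuousAt_zero_of_le_mul_abs (C := 8 * I) hf₃0 hf₃_nonneg ?_⟩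
  filter_upwards [Ioo_mem_nhds (neg_lt_zero.2 one_pos) one_pos] with y hy
  rcases eq_or_ne y 0 with rfl | hy0
  · simp [hf₃0]
  rw [hf₃_eq y hy0]
  linarith [hbound |y| (abs_pos.2 hy0) (abs_lt.2 hy).le]

/-- Nonnegativity and continuity-at-zero part of Lemma 4.7 (with `β = 1`): under the
assumptions on `V''` (even, nonnegative on `(0,∞)`, with finite sup-envelope `𝕍₂` such that
`z² 𝕍₂(z)` is integrable on `(1,∞)`), there is `C > 0` with
`Σ_{k≥1} (k²/y²) V''(k/y) ≤ C y` for all `y ∈ (0,1)`; consequently the diffusion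
coefficient `f₃` is nonnegative and continuous at `0`. -/
theorem stmt14 (V V' V'' : ℝ → ℝ)
    (hderiv1 : ∀ z : ℝ, 0 < z → HasDerivAt V (V' z) z)
    (hderiv2 : ∀ z : ℝ, 0 < z → HasDerivAt V' (V'' z) z)
    (hcont : ContinuousOn V'' (Set.Ioi 0))
    (hconv : ∀ z : ℝ, 0 < z → 0 ≤ V'' z)
    (heven : ∀ z : ℝ, V'' (-z) = V'' z)
    (𝕍₂ : ℝ → ℝ) (h𝕍 : ∀ x : ℝ, 𝕍₂ x = sSup ((fun y : ℝ => |V'' y|) '' Set.Ioi x))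
    (hfin : ∀ x : ℝ, 0 < x → BddAbove ((fun y : ℝ => |V'' y|) '' Set.Ioi x))
    (hint : MeasureTheory.IntegrableOn (fun z : ℝ => z ^ 2 * 𝕍₂ z) (Set.Ioi 1))
    (f₃ : ℝ → ℝ)
    (hf₃ : ∀ y : ℝ, y ≠ 0 → f₃ y = (1 / y ^ 2) * ∑' k : ℕ, ((k : ℝ) + 1) ^ 2 * V'' (((k : ℝ) + 1) / y))
    (hf₃0 : f₃ 0 = 0) :
    (∃ C : ℝ, 0 < C ∧ ∀ y : ℝ, 0 < y → y < 1 →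
      ∑' k : ℕ, ((k : ℝ) + 1) ^ 2 / y ^ 2 * V'' (((k : ℝ) + 1) / y) ≤ C * y) ∧
    (∀ y : ℝ, 0 ≤ f₃ y) ∧ ContinuousAt f₃ 0 :=
  stmt14_general V'' hconv heven 𝕍₂ h𝕍 hfin hint f₃ hf₃ hf₃0
end
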